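/- Let n ≥ 1 and work in the real Clifford algebra Cl_n with generators e_1, …, e_n satisfying e_i e_j + e_j e_i = −2δ_{ij}. Let c : Fin n → Fin n → Fin n → Fin n → ℝ satisfy: c_{ijkl} = −c_{jikl}, c_{ijkl} = −c_{ijlk}, and c_{ijkl} = c_{klij} for all i, j, k, l. Then (1/16) Σ_{i,j,k,l} c_{ijkl} e_i e_j e_k e_l = (1/48) Σ_{i,j,k,l} ( c_{ijkl} − c_{ikjl} + c_{iljk} ) e_i e_j e_k e_l − (1/8) ( Σ_{i,j} c_{ijij} ) · 1. -/
import Mathlib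

section CliffAux

variable {n : ℕ} {A : Type*} [Ring A] [Algebra ℝ A]

/-- The quadruple sum `∑ a_{ijkl} e_i e_j e_k e_l`. -/
def cliffTsum (e : Fin n → A) (a : Fin n → Fin n → Fin n → Fin n → ℝ) : A :=
  ∑ i : Fin n, ∑ j : Fin n, ∑ k : Fin n, ∑ l : Fin n, a i j k l • (e i * e j * e k * e l)

lemma cliff_reorder4 (f : Fin n → Fin n → Fin n → Fin n → A) :
    ∑ i : Fin n, ∑ j : Fin n, ∑ k : Fin n, ∑ l : Fin n, f i j k l
      = ∑ i : Fin n, ∑ l : Fin n, ∑ j : Fin n, ∑ k : Fin n, f i j k l := by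
  refine Finset.sum_congr rfl fun i _ => ?_
  calc ∑ j : Fin n, ∑ k : Fin n, ∑ l : Fin n, f i j k l
      = ∑ j : Fin n, ∑ l : Fin n, ∑ k : Fin n, f i j k l :=
        Finset.sum_congr rfl fun j _ => Finset.sum_comm
    _ = ∑ l : Fin n, ∑ j : Fin n, ∑ k : Fin n, f i j k l := Finset.sum_comm

variable (e : Fin n → A)
variable (he : ∀ i j, e i * e j + e j * e i = (if i = j then (-2 : ℝ) else 0) • (1 : A))

include he in
/-- For a symmetric matrix `p`, `∑ p_{ij} e_i e_j = -(∑ p_{ii}) • 1`. -/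
lemma cliff_aux_sym (p : Fin n → Fin n → ℝ) (hp : ∀ i j, p i j = p j i) :
    ∑ i : Fin n, ∑ j : Fin n, p i j • (e i * e j) = (-∑ i : Fin n, p i i) • (1 : A) := by
  have h1 : ∑ i : Fin n, ∑ j : Fin n, p i j • (e j * e i)
      = ∑ i : Fin n, ∑ j : Fin n, p i j • (e i * e j) := by
    rw [Finset.sum_comm]
    exact Finset.sum_congr rfl fun i _ => Finset.sum_congr rfl fun j _ => by rw [hp j i]
  have h2 : (2 : ℝ) • (∑ i : Fin n, ∑ j : Fin n, p i j • (e i * e j))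
      = ∑ i : Fin n, ∑ j : Fin n, p i j • (e i * e j + e j * e i) := by
    simp only [smul_add, Finset.sum_add_distrib, two_smul]
    rw [h1]
  have h3 : ∑ i : Fin n, ∑ j : Fin n, p i j • (e i * e j + e j * e i)
      = (2 : ℝ) • ((-∑ i : Fin n, p i i) • (1 : A)) := by
    have hterm : ∀ i j : Fin n, p i j • (e i * e j + e j * e i)
        = (if j = i then p i j * (-2) else 0) • (1 : A) := by
      intro i j
      rw [he i j]
      by_cases h : i = j
      · subst h; simp [smul_smul, mul_comm]
      · simp [h, Ne.symm h]
    calc ∑ i : Fin n, ∑ j : Fin n, p i j • (e i * e j + e j * e i)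
        = ∑ i : Fin n, ∑ j : Fin n, (if j = i then p i j * (-2) else 0) • (1 : A) :=
          Finset.sum_congr rfl fun i _ => Finset.sum_congr rfl fun j _ => hterm i j
      _ = ∑ i : Fin n, (p i i * (-2)) • (1 : A) := by
          refine Finset.sum_congr rfl fun i _ => ?_
          rw [← Finset.sum_smul, Finset.sum_ite_eq' Finset.univ i (fun j => p i j * (-2))]
          simp
      _ = (2 : ℝ) • ((-∑ i : Fin n, p i i) • (1 : A)) := by
          rw [← Finset.sum_smul, smul_smul]
          congr 1
          rw [← Finset.sum_mul]
          ring
  have := h2.trans h3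
  exact smul_right_injective A (two_ne_zero) this

include he in
/-- Swapping two adjacent Clifford generators inside a double sum. -/
lemma cliff_aux_swap (x y : A) (a : Fin n → Fin n → ℝ) :
    ∑ j : Fin n, ∑ k : Fin n, a j k • (x * e j * e k * y)
      = (-2 * ∑ j : Fin n, a j j) • (x * y)
        - ∑ j : Fin n, ∑ k : Fin n, a k j • (x * e j * e k * y) := by
  have hrel : ∀ j k : Fin n, x * e j * e k * y
      = (if j = k then (-2 : ℝ) else 0) • (x * y) - x * e k * e j * y := by
    intro j k
    have hjk : e j * e k = (if j = k then (-2 : ℝ) else 0) • (1 : A) - e k * e j :=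
      eq_sub_of_add_eq (he j k)
    calc x * e j * e k * y = x * (e j * e k) * y := by rw [mul_assoc x]
      _ = x * ((if j = k then (-2 : ℝ) else 0) • (1 : A) - e k * e j) * y := by rw [hjk]
      _ = (if j = k then (-2 : ℝ) else 0) • (x * y) - x * e k * e j * y := by
          rw [mul_sub, sub_mul, mul_smul_comm, smul_mul_assoc, mul_one, mul_assoc x,
            ← mul_assoc, ← mul_assoc]
  calc ∑ j : Fin n, ∑ k : Fin n, a j k • (x * e j * e k * y)
      = ∑ j : Fin n, ∑ k : Fin n,
          ((if j = k then (-2 : ℝ) else 0) • (a j k • (x * y))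
            - a j k • (x * e k * e j * y)) := by
        refine Finset.sum_congr rfl fun j _ => Finset.sum_congr rfl fun k _ => ?_
        rw [hrel j k, smul_sub, smul_comm]
    _ = (∑ j : Fin n, ∑ k : Fin n, (if j = k then (-2 : ℝ) else 0) • (a j k • (x * y)))
        - ∑ j : Fin n, ∑ k : Fin n, a j k • (x * e k * e j * y) := by
        simp only [Finset.sum_sub_distrib]
    _ = (-2 * ∑ j : Fin n, a j j) • (x * y)
        - ∑ j : Fin n, ∑ k : Fin n, a k j • (x * e j * e k * y) := by
        congr 1
        · simp only [ite_smul, zero_smul, Finset.sum_ite_eq, Finset.mem_univ, if_true]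
          simp only [smul_smul]
          rw [← Finset.sum_smul, ← Finset.mul_sum]
        · exact Finset.sum_comm
    
include he in
/-- Step A: swap the middle pair of generators. -/
lemma cliff_stepA (a : Fin n → Fin n → Fin n → Fin n → ℝ) :
    cliffTsum e a
      = (∑ i : Fin n, ∑ l : Fin n, (-2 * ∑ j : Fin n, a i j j l) • (e i * e l))
        - cliffTsum e (fun i j k l => a i k j l) := by
  calc cliffTsum e a
      = ∑ i : Fin n, ∑ l : Fin n, ∑ j : Fin n, ∑ k : Fin n,
          a i j k l • (e i * e j * e k * e l) := cliff_reorder4 _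
    _ = ∑ i : Fin n, ∑ l : Fin n,
          ((-2 * ∑ j : Fin n, a i j j l) • (e i * e l)
            - ∑ j : Fin n, ∑ k : Fin n, a i k j l • (e i * e j * e k * e l)) := by
        refine Finset.sum_congr rfl fun i _ => Finset.sum_congr rfl fun l _ => ?_
        exact cliff_aux_swap e he (e i) (e l) (fun j k => a i j k l)
    _ = (∑ i : Fin n, ∑ l : Fin n, (-2 * ∑ j : Fin n, a i j j l) • (e i * e l))
        - ∑ i : Fin n, ∑ l : Fin n, ∑ j : Fin n, ∑ k : Fin n,
            a i k j l • (e i * e j * e k * e l) := by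
        simp only [Finset.sum_sub_distrib]
    _ = _ := by rw [← cliff_reorder4 (fun i j k l => a i k j l • (e i * e j * e k * e l))]; rfl

include he in
/-- Step B: swap the last pair of generators. -/
lemma cliff_stepB (b : Fin n → Fin n → Fin n → Fin n → ℝ) :
    cliffTsum e b
      = (∑ i : Fin n, ∑ j : Fin n, (-2 * ∑ k : Fin n, b i j k k) • (e i * e j))
        - cliffTsum e (fun i j k l => b i j l k) := by
  have hin : ∀ i j : Fin n,
      ∑ k : Fin n, ∑ l : Fin n, b i j k l • (e i * e j * e k * e l)
        = (-2 * ∑ k : Fin n, b i j k k) • (e i * e j)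
          - ∑ k : Fin n, ∑ l : Fin n, b i j l k • (e i * e j * e k * e l) := by
    intro i j
    have h := cliff_aux_swap e he (e i * e j) 1 (fun k l => b i j k l)
    simpa only [mul_one] using h
  calc cliffTsum e b
      = ∑ i : Fin n, ∑ j : Fin n,
          ((-2 * ∑ k : Fin n, b i j k k) • (e i * e j)
            - ∑ k : Fin n, ∑ l : Fin n, b i j l k • (e i * e j * e k * e l)) :=
        Finset.sum_congr rfl fun i _ => Finset.sum_congr rfl fun j _ => hin i j
    _ = _ := by simp only [Finset.sum_sub_distrib]; rfl

end CliffAux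

lemma cliff_polar_single (n : ℕ) (i j : Fin n) :
    QuadraticMap.polar (⇑(QuadraticMap.weightedSumSquares ℝ (fun _ : Fin n => (-1 : ℝ))))
      (Pi.single i 1) (Pi.single j 1) = if i = j then -2 else 0 := by
  rw [QuadraticMap.polar]
  simp only [QuadraticMap.weightedSumSquares_apply, Pi.add_apply, smul_eq_mul]
  rw [← Finset.sum_sub_distrib, ← Finset.sum_sub_distrib]
  have key : ∀ k : Fin n,
      (-1 : ℝ) * (((Pi.single i 1 : Fin n → ℝ) k + (Pi.single j 1 : Fin n → ℝ) k) *
          ((Pi.single i 1 : Fin n → ℝ) k + (Pi.single j 1 : Fin n → ℝ) k))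
        - (-1) * ((Pi.single i 1 : Fin n → ℝ) k * (Pi.single i 1 : Fin n → ℝ) k)
        - (-1) * ((Pi.single j 1 : Fin n → ℝ) k * (Pi.single j 1 : Fin n → ℝ) k)
      = if k = i then (if k = j then (-2 : ℝ) else 0) else 0 := by
    intro k
    rw [Pi.single_apply, Pi.single_apply]
    split_ifs <;> ring
  rw [Finset.sum_congr rfl fun k _ => key k]
  rw [Finset.sum_ite_eq' Finset.univ i (fun k => if k = j then (-2 : ℝ) else 0)]
  simp [eq_comm]

/-- In the real Clifford algebra `Cl_n` of the negative-definite
quadratic form on `ℝⁿ`, for an array `c` antisymmetric in the first and last index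
pairs and symmetric under exchange of the two pairs, one has
`(1/16) ∑ c_{ijkl} e_i e_j e_k e_l
  = (1/48) ∑ (c_{ijkl} - c_{ikjl} + c_{iljk}) e_i e_j e_k e_l - (1/8)(∑ c_{ijij}) • 1`. -/
theorem clifford_quartic_decomposition (n : ℕ) (hn : 1 ≤ n)
    (c : Fin n → Fin n → Fin n → Fin n → ℝ)
    (h1 : ∀ i j k l, c i j k l = - c j i k l)
    (h2 : ∀ i j k l, c i j k l = - c i j l k)
    (h3 : ∀ i j k l, c i j k l = c k l i j) :
    let Q : QuadraticForm ℝ (Fin n → ℝ) :=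
      QuadraticMap.weightedSumSquares ℝ (fun _ : Fin n => (-1 : ℝ))
    let e : Fin n → CliffordAlgebra Q := fun i => CliffordAlgebra.ι Q (Pi.single i 1)
    (16 : ℝ)⁻¹ • ∑ i : Fin n, ∑ j : Fin n, ∑ k : Fin n, ∑ l : Fin n,
        c i j k l • (e i * e j * e k * e l)
      = (48 : ℝ)⁻¹ • (∑ i : Fin n, ∑ j : Fin n, ∑ k : Fin n, ∑ l : Fin n,
            (c i j k l - c i k j l + c i l j k) • (e i * e j * e k * e l))
        - ((8 : ℝ)⁻¹ * ∑ i : Fin n, ∑ j : Fin n, c i j i j) • (1 : CliffordAlgebra Q) := by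
  intro Q e
  have he : ∀ i j, e i * e j + e j * e i
      = (if i = j then (-2 : ℝ) else 0) • (1 : CliffordAlgebra Q) := by
    intro i j
    show CliffordAlgebra.ι Q (Pi.single i 1) * CliffordAlgebra.ι Q (Pi.single j 1)
        + CliffordAlgebra.ι Q (Pi.single j 1) * CliffordAlgebra.ι Q (Pi.single i 1) = _
    rw [CliffordAlgebra.ι_mul_ι_add_swap, cliff_polar_single, Algebra.algebraMap_eq_smul_one]
  set t : ℝ := ∑ i : Fin n, ∑ j : Fin n, c i j i j with ht
  -- the three quadruple sums
  have hsplit : (∑ i : Fin n, ∑ j : Fin n, ∑ k : Fin n, ∑ l : Fin n,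
        (c i j k l - c i k j l + c i l j k) • (e i * e j * e k * e l))
      = cliffTsum e c - cliffTsum e (fun i j k l => c i k j l)
        + cliffTsum e (fun i j k l => c i l j k) := by
    simp only [cliffTsum, sub_smul, add_smul, Finset.sum_add_distrib, Finset.sum_sub_distrib]
  -- Step A
  have hA : cliffTsum e c = (-2 * t) • (1 : CliffordAlgebra Q)
      - cliffTsum e (fun i j k l => c i k j l) := by
    rw [cliff_stepA e he c]
    congr 1
    have hsym : ∀ i l : Fin n, (-2 * ∑ j : Fin n, c i j j l) = -2 * ∑ j : Fin n, c l j j i := by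
      intro i l
      congr 1
      refine Finset.sum_congr rfl fun j _ => ?_
      have e1 := h3 l j j i
      have e2 := h1 j i l j
      have e3 := h2 i j j l
      linarith
    rw [cliff_aux_sym e he (fun i l => -2 * ∑ j : Fin n, c i j j l) hsym]
    congr 1
    have hdiag : ∀ i : Fin n, (-2 * ∑ j : Fin n, c i j j i) = 2 * ∑ j : Fin n, c i j i j := by
      intro i
      have : ∑ j : Fin n, c i j j i = ∑ j : Fin n, -(c i j i j) :=
        Finset.sum_congr rfl fun j _ => by have := h2 i j i j; linarith
      rw [this, Finset.sum_neg_distrib]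
      ring
    rw [Finset.sum_congr rfl fun i _ => hdiag i, ht, ← Finset.mul_sum]
    ring
  -- Step B
  have hB : cliffTsum e (fun i j k l => c i k j l) = (2 * t) • (1 : CliffordAlgebra Q)
      - cliffTsum e (fun i j k l => c i l j k) := by
    rw [cliff_stepB e he (fun i j k l => c i k j l)]
    congr 1
    have hsym : ∀ i j : Fin n, (-2 * ∑ k : Fin n, c i k j k) = -2 * ∑ k : Fin n, c j k i k := by
      intro i j
      congr 1
      exact Finset.sum_congr rfl fun k _ => h3 i k j k
    rw [cliff_aux_sym e he (fun i j => -2 * ∑ k : Fin n, c i k j k) hsym]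
    congr 1
    rw [ht, ← Finset.mul_sum]
    ring
  have hC : cliffTsum e (fun i j k l => c i l j k)
      = (2 * t) • (1 : CliffordAlgebra Q) - cliffTsum e (fun i j k l => c i k j l) := by
    rw [hB]; abel
  show (16 : ℝ)⁻¹ • cliffTsum e c
      = (48 : ℝ)⁻¹ • (∑ i : Fin n, ∑ j : Fin n, ∑ k : Fin n, ∑ l : Fin n,
            (c i j k l - c i k j l + c i l j k) • (e i * e j * e k * e l))
        - ((8 : ℝ)⁻¹ * t) • (1 : CliffordAlgebra Q)
  rw [hsplit, hA, hC]
  module
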